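/- System completion reduction: for X ⊆ {n ∈ ℕ : n > 1} with completion X̂, if nK + ♦_{4X̂} proves a nested sequent Γ, then nK + ♦_{4X} proves Γ. In particular, each rule ♦_{4n} with n ∈ X̂ is admissible in nK + ♦_{4X}. -/

import Mathlib

/-! Formulas of modal logic in negation normal form. -/
inductive Formula : Type
  | pos : ℕ → Formula
  | neg : ℕ → Formula
  | and : Formula → Formula → Formula
  | or : Formula → Formula → Formula
  | box : Formula → Formula
  | dia : Formula → Formula
  deriving DecidableEq

namespace Formula

/-- Negation by de Morgan duality. -/
def negf : Formula → Formula
  | pos p => neg p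
  | neg p => pos p
  | and A B => or A.negf B.negf
  | or A B => and A.negf B.negf
  | box A => dia A.negf
  | dia A => box A.negf

/-- The (modal) degree of a formula. -/
def deg : Formula → ℕ
  | pos _ => 0
  | neg _ => 0
  | and A B => A.deg + B.deg
  | or A B => A.deg + B.deg
  | box A => A.deg + 1
  | dia A => A.deg + 1

/-- Implication `A ⊃ B := Ā ∨ B`. -/
def impl (A B : Formula) : Formula := or A.negf B

def bot : Formula := and (pos 0) (neg 0)

/-- `♦ⁿ A`. -/
def diaIter : ℕ → Formula → Formula
  | 0, A => A
  | n+1, A => dia (diaIter n A)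

end Formula

/-- Nested sequents: finite multisets of formulas and boxed sequents,
represented as list-like trees considered up to permutation (`NSeq.Perm`). -/
inductive NSeq : Type
  | nil : NSeq
  | fcons : Formula → NSeq → NSeq
  | bcons : NSeq → NSeq → NSeq

namespace NSeq

/-- Multiset union of nested sequents. -/
def append : NSeq → NSeq → NSeq
  | nil, Δ => Δ
  | fcons A Γ, Δ => fcons A (Γ.append Δ)
  | bcons B Γ, Δ => bcons B (Γ.append Δ)

/-- Multiset-like equivalence of nested sequents (hereditary permutation). -/
inductive Perm : NSeq → NSeq → Prop
  | nil : Perm nil nil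
  | fcons (A : Formula) {Γ Δ : NSeq} : Perm Γ Δ → Perm (fcons A Γ) (fcons A Δ)
  | bcons {B B' Γ Δ : NSeq} : Perm B B' → Perm Γ Δ → Perm (bcons B Γ) (bcons B' Δ)
  | swapff (A B : Formula) (Γ : NSeq) : Perm (fcons A (fcons B Γ)) (fcons B (fcons A Γ))
  | swapfb (A : Formula) (B Γ : NSeq) : Perm (fcons A (bcons B Γ)) (bcons B (fcons A Γ))
  | swapbf (A : Formula) (B Γ : NSeq) : Perm (bcons B (fcons A Γ)) (fcons A (bcons B Γ))
  | swapbb (B C Γ : NSeq) : Perm (bcons B (bcons C Γ)) (bcons C (bcons B Γ))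
  | trans {Γ Δ Θ : NSeq} : Perm Γ Δ → Perm Δ Θ → Perm Γ Θ

/-- The corresponding formula of a nested sequent. -/
def form : NSeq → Formula
  | nil => Formula.bot
  | fcons A Γ => Formula.or A Γ.form
  | bcons B Γ => Formula.or Γ.form (Formula.box B.form)

end NSeq

/-- Contexts: nested sequents with a single hole. -/
inductive Ctx : Type
  | hole : Ctx
  | fcons : Formula → Ctx → Ctx
  | scons : NSeq → Ctx → Ctx
  | binto : Ctx → NSeq → Ctx

namespace Ctx

/-- Filling the hole of a context with a nested sequent. -/
def fill : Ctx → NSeq → NSeq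
  | hole, Δ => Δ
  | fcons A C, Δ => NSeq.fcons A (C.fill Δ)
  | scons S C, Δ => NSeq.bcons S (C.fill Δ)
  | binto C S, Δ => NSeq.bcons (C.fill Δ) S

/-- The depth of a context. -/
def depth : Ctx → ℕ
  | hole => 0
  | fcons _ C => C.depth
  | scons _ C => C.depth
  | binto C _ => C.depth + 1

end Ctx

/-- `nestBox [Δ₁, …, Δₖ] Θ = [Δ₁, [Δ₂, [ … , [Δₖ, Θ'] … ]]]` where the innermost
box contains `Δₖ` together with the box `[Θ]`; i.e. a chain of `k+1` nested boxes
whose `i`-th box contains `Δᵢ` and whose innermost box is `[Θ]`. -/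
def nestBox : List NSeq → NSeq → NSeq
  | [], Θ => NSeq.bcons Θ NSeq.nil
  | Δ :: rest, Θ => NSeq.bcons (Δ.append (nestBox rest Θ)) NSeq.nil

/-- `iterBox n Δ`: `n` nested boxes around `Δ`. -/
def iterBox : ℕ → NSeq → NSeq
  | 0, Δ => Δ
  | n+1, Δ => NSeq.bcons (iterBox n Δ) NSeq.nil

/-- Proofs in the nested sequent system `nK` extended with the propagation rules
`♦ₖₙ` for `n ∈ Xk`, the propagation rules `♦₄ₙ` for `n ∈ X4`, and the cut rule
restricted to cut formulas whose degree satisfies `ρ`.  The index `h` is an upper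
bound on the height of the proof. -/
inductive Prf (Xk X4 : Set ℕ) (ρ : ℕ → Prop) : ℕ → NSeq → Prop
  | id (Γ : Ctx) (p : ℕ) (h : ℕ) :
      Prf Xk X4 ρ h (Γ.fill (NSeq.fcons (.pos p) (NSeq.fcons (.neg p) NSeq.nil)))
  | orR {h : ℕ} (Γ : Ctx) (A B : Formula) :
      Prf Xk X4 ρ h (Γ.fill (NSeq.fcons A (NSeq.fcons B NSeq.nil))) →
      Prf Xk X4 ρ (h+1) (Γ.fill (NSeq.fcons (.or A B) NSeq.nil))
  | andR {h : ℕ} (Γ : Ctx) (A B : Formula) :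
      Prf Xk X4 ρ h (Γ.fill (NSeq.fcons A NSeq.nil)) →
      Prf Xk X4 ρ h (Γ.fill (NSeq.fcons B NSeq.nil)) →
      Prf Xk X4 ρ (h+1) (Γ.fill (NSeq.fcons (.and A B) NSeq.nil))
  | boxR {h : ℕ} (Γ : Ctx) (A : Formula) :
      Prf Xk X4 ρ h (Γ.fill (NSeq.bcons (NSeq.fcons A NSeq.nil) NSeq.nil)) →
      Prf Xk X4 ρ (h+1) (Γ.fill (NSeq.fcons (.box A) NSeq.nil))
  | diaR {h : ℕ} (Γ : Ctx) (A : Formula) (Δ : NSeq) :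
      Prf Xk X4 ρ h (Γ.fill (NSeq.fcons (.dia A) (NSeq.bcons (NSeq.fcons A Δ) NSeq.nil))) →
      Prf Xk X4 ρ (h+1) (Γ.fill (NSeq.fcons (.dia A) (NSeq.bcons Δ NSeq.nil)))
  | propk {h : ℕ} (Γ : Ctx) (A : Formula) (Δs : List NSeq) (Δn : NSeq)
      (hn : Δs.length + 1 ∈ Xk) :
      Prf Xk X4 ρ h (Γ.fill (NSeq.fcons (.dia A) (nestBox Δs (NSeq.fcons A Δn)))) →
      Prf Xk X4 ρ (h+1) (Γ.fill (NSeq.fcons (.dia A) (nestBox Δs Δn)))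
  | prop4 {h : ℕ} (Γ : Ctx) (A : Formula) (Δs : List NSeq) (Δl : NSeq)
      (hn : Δs.length + 2 ∈ X4) :
      Prf Xk X4 ρ h (Γ.fill (NSeq.fcons (.dia A) (nestBox Δs (NSeq.fcons (.dia A) Δl)))) →
      Prf Xk X4 ρ (h+1) (Γ.fill (NSeq.fcons (.dia A) (nestBox Δs Δl)))
  | cut {h : ℕ} (Γ : Ctx) (A : Formula) (hA : ρ A.deg) :
      Prf Xk X4 ρ h (Γ.fill (NSeq.fcons A NSeq.nil)) →
      Prf Xk X4 ρ h (Γ.fill (NSeq.fcons A.negf NSeq.nil)) →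
      Prf Xk X4 ρ (h+1) (Γ.fill NSeq.nil)
  | exch {h : ℕ} {Γ Δ : NSeq} : NSeq.Perm Γ Δ → Prf Xk X4 ρ h Γ → Prf Xk X4 ρ h Δ

/-- No cut formula allowed: the cut-free system. -/
def cutFree : ℕ → Prop := fun _ => False

/-- Unrestricted cut. -/
def cutAll : ℕ → Prop := fun _ => True

/-- Provability (some proof of some height). -/
def Provable (Xk X4 : Set ℕ) (ρ : ℕ → Prop) (Γ : NSeq) : Prop := ∃ h, Prf Xk X4 ρ h Γ

/-- Hilbert-style provability in `K + 4^X`: classical propositional logic,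
axiom k, modus ponens, necessitation, and quasi-transitivity `♦ⁿA ⊃ ♦A` for `n ∈ X`. -/
inductive KProv (X : Set ℕ) : Formula → Prop
  | ax1 (A B : Formula) : KProv X (A.impl (B.impl A))
  | ax2 (A B C : Formula) : KProv X ((A.impl B).impl ((A.impl (B.impl C)).impl (A.impl C)))
  | andI (A B : Formula) : KProv X (A.impl (B.impl (A.and B)))
  | andE1 (A B : Formula) : KProv X ((A.and B).impl A)
  | andE2 (A B : Formula) : KProv X ((A.and B).impl B)
  | orI1 (A B : Formula) : KProv X (A.impl (A.or B))
  | orI2 (A B : Formula) : KProv X (B.impl (A.or B))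
  | orE (A B C : Formula) : KProv X ((A.impl C).impl ((B.impl C).impl ((A.or B).impl C)))
  | negI (A B : Formula) : KProv X ((A.impl B).impl ((A.impl B.negf).impl A.negf))
  | negE (A : Formula) : KProv X (A.negf.negf.impl A)
  | axK (A B : Formula) :
      KProv X ((Formula.box (A.impl B)).impl ((Formula.box A).impl (Formula.box B)))
  | mp {A B : Formula} : KProv X (A.impl B) → KProv X A → KProv X B
  | nec {A : Formula} : KProv X A → KProv X (Formula.box A)
  | path {n : ℕ} (hn : n ∈ X) (A : Formula) :
      KProv X ((Formula.diaIter n A).impl (Formula.dia A))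

/-- The approximations `X_p` of the completion of `X`. -/
def compStep (X : Set ℕ) : ℕ → Set ℕ
  | 0 => X
  | p+1 => compStep X p ∪ {k | ∃ m n, m ∈ compStep X p ∧ n ∈ compStep X p ∧ k = m + n - 1}

/-- The completion `X̂` of `X`. -/
def completion (X : Set ℕ) : Set ℕ := ⋃ p, compStep X p

/-! Weakening (hereditary sublist) is height-preserving admissible in every system `Prf Xk X4 ρ`.
With it, `♦₄₍ₘ₊ₗ₋₁₎` is derivable from `♦₄ₘ` and `♦₄ₗ`: to delete a `♦A` sitting `m + l - 1` boxes
below the principal `♦A`, first weaken a copy of `♦A` into the box at depth `m - 1`, delete the deep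
occurrence with `♦₄ₗ` from there, and then delete the weakened copy with `♦₄ₘ`. By induction on the
stages of the completion every `♦₄ₙ` with `n ∈ X̂` is admissible over `♦₄X`, so each such rule in a
derivation can be eliminated. -/

namespace NSeq

theorem append_nil : ∀ Γ : NSeq, Γ.append nil = Γ
  | nil => rfl
  | fcons A Γ => by rw [append, append_nil Γ]
  | bcons B Γ => by rw [append, append_nil Γ]

theorem append_assoc : ∀ Γ Δ Θ : NSeq, (Γ.append Δ).append Θ = Γ.append (Δ.append Θ)
  | nil, _, _ => rfl
  | fcons A Γ, Δ, Θ => by rw [append, append, append, append_assoc Γ]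
  | bcons B Γ, Δ, Θ => by rw [append, append, append, append_assoc Γ]

namespace Perm

protected theorem refl : ∀ Γ : NSeq, Perm Γ Γ
  | .nil => .nil
  | .fcons A Γ => .fcons A (Perm.refl Γ)
  | .bcons B Γ => .bcons (Perm.refl B) (Perm.refl Γ)

protected theorem symm {Γ Δ : NSeq} (h : Perm Γ Δ) : Perm Δ Γ := by
  induction h with
  | nil => exact .nil
  | fcons A _ ih => exact .fcons A ih
  | bcons _ _ ih₁ ih₂ => exact .bcons ih₁ ih₂
  | swapff A B Γ => exact .swapff B A Γ
  | swapfb A B Γ => exact .swapbf A B Γ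
  | swapbf A B Γ => exact .swapfb A B Γ
  | swapbb B C Γ => exact .swapbb C B Γ
  | trans _ _ ih₁ ih₂ => exact .trans ih₂ ih₁

theorem append_left (Γ : NSeq) {Δ Δ' : NSeq} (h : Perm Δ Δ') :
    Perm (Γ.append Δ) (Γ.append Δ') := by
  induction Γ with
  | nil => exact h
  | fcons A Γ ih => exact .fcons A ih
  | bcons B Γ _ ih => exact .bcons (.refl B) ih

end Perm

theorem perm_fcons_middle (A : Formula) :
    ∀ Δ Γ : NSeq, Perm (fcons A (Δ.append Γ)) (Δ.append (fcons A Γ))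
  | nil, _ => .refl _
  | fcons B Δ, Γ => .trans (.swapff A B _) (.fcons B (perm_fcons_middle A Δ Γ))
  | bcons B Δ, Γ => .trans (.swapfb A B _) (.bcons (.refl B) (perm_fcons_middle A Δ Γ))

theorem perm_bcons_middle (B : NSeq) :
    ∀ Δ Γ : NSeq, Perm (bcons B (Δ.append Γ)) (Δ.append (bcons B Γ))
  | nil, _ => .refl _
  | fcons A Δ, Γ => .trans (.swapbf A B _) (.fcons A (perm_bcons_middle B Δ Γ))
  | bcons C Δ, Γ => .trans (.swapbb B C _) (.bcons (.refl C) (perm_bcons_middle B Δ Γ))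

theorem perm_append_comm : ∀ Γ Δ : NSeq, Perm (Γ.append Δ) (Δ.append Γ)
  | nil, Δ => by rw [append_nil]; exact .refl Δ
  | fcons A Γ, Δ => .trans (.fcons A (perm_append_comm Γ Δ)) (perm_fcons_middle A Δ Γ)
  | bcons B Γ, Δ => .trans (.bcons (.refl B) (perm_append_comm Γ Δ)) (perm_bcons_middle B Δ Γ)

end NSeq

namespace Ctx

theorem fill_perm : ∀ (C : Ctx) {Δ Δ' : NSeq}, NSeq.Perm Δ Δ' → NSeq.Perm (C.fill Δ) (C.fill Δ')
  | hole, _, _, h => h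
  | fcons A C, _, _, h => .fcons A (fill_perm C h)
  | scons S C, _, _, h => .bcons (.refl S) (fill_perm C h)
  | binto C S, _, _, h => .bcons (fill_perm C h) (.refl S)

def comp : Ctx → Ctx → Ctx
  | hole, D => D
  | fcons A C, D => fcons A (C.comp D)
  | scons S C, D => scons S (C.comp D)
  | binto C S, D => binto (C.comp D) S

theorem fill_comp : ∀ (C D : Ctx) (Δ : NSeq), (C.comp D).fill Δ = C.fill (D.fill Δ)
  | hole, _, _ => rfl
  | fcons A C, D, Δ => by rw [comp, fill, fill, fill_comp C]
  | scons S C, D, Δ => by rw [comp, fill, fill, fill_comp C]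
  | binto C S, D, Δ => by rw [comp, fill, fill, fill_comp C]

def prepend : NSeq → Ctx
  | .nil => hole
  | .fcons A Γ => fcons A (prepend Γ)
  | .bcons B Γ => scons B (prepend Γ)

@[simp]
theorem fill_prepend : ∀ Δ Θ : NSeq, (prepend Δ).fill Θ = Δ.append Θ
  | .nil, _ => rfl
  | .fcons A Γ, Θ => by rw [prepend, fill, NSeq.append, fill_prepend Γ]
  | .bcons B Γ, Θ => by rw [prepend, fill, NSeq.append, fill_prepend Γ]

def nestBox : List NSeq → Ctx
  | [] => binto hole .nil
  | Δ :: rest => binto ((prepend Δ).comp (nestBox rest)) .nil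

theorem fill_nestBox : ∀ (Δs : List NSeq) (Θ : NSeq), (nestBox Δs).fill Θ = _root_.nestBox Δs Θ
  | [], _ => rfl
  | Δ :: rest, Θ => by
      rw [nestBox, fill, fill_comp, fill_prepend, fill_nestBox rest, _root_.nestBox]

end Ctx

theorem nestBox_append : ∀ (Δs : List NSeq) (Δ : NSeq) (Δs' : List NSeq) (Θ : NSeq),
    nestBox (Δs ++ Δ :: Δs') Θ = nestBox Δs (Δ.append (nestBox Δs' Θ))
  | [], _, _, _ => rfl
  | _ :: Δs, Δ, Δs', Θ => by rw [List.cons_append, nestBox, nestBox_append Δs, nestBox]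

theorem List.exists_eq_append_cons_of_lt {α : Type*} {l : List α} {i : ℕ} (h : i < l.length) :
    ∃ l₁ a l₂, l = l₁ ++ a :: l₂ ∧ l₁.length = i :=
  ⟨_, _, _, by rw [← List.drop_eq_getElem_cons h, List.take_append_drop],
    List.length_take_of_le h.le⟩

namespace NSeq

inductive Sublist : NSeq → NSeq → Prop
  | nil : Sublist nil nil
  | fcons (A : Formula) {Γ Δ : NSeq} : Sublist Γ Δ → Sublist (fcons A Γ) (fcons A Δ)
  | bcons {B B' Γ Δ : NSeq} : Sublist B B' → Sublist Γ Δ → Sublist (bcons B Γ) (bcons B' Δ)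
  | skipf (A : Formula) {Γ Δ : NSeq} : Sublist Γ Δ → Sublist Γ (fcons A Δ)
  | skipb (B : NSeq) {Γ Δ : NSeq} : Sublist Γ Δ → Sublist Γ (bcons B Δ)

namespace Sublist

protected theorem refl : ∀ Γ : NSeq, Sublist Γ Γ
  | .nil => .nil
  | .fcons A Γ => .fcons A (Sublist.refl Γ)
  | .bcons B Γ => .bcons (Sublist.refl B) (Sublist.refl Γ)

theorem nil_sublist : ∀ Γ : NSeq, Sublist .nil Γ
  | .nil => .nil
  | .fcons A Γ => .skipf A (nil_sublist Γ)
  | .bcons B Γ => .skipb B (nil_sublist Γ)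

theorem append {Γ Γ' Δ Δ' : NSeq} (h₁ : Sublist Γ Γ') (h₂ : Sublist Δ Δ') :
    Sublist (Γ.append Δ) (Γ'.append Δ') := by
  induction h₁ with
  | nil => exact h₂
  | fcons A _ ih => exact .fcons A ih
  | bcons hB _ _ ih => exact .bcons hB ih
  | skipf A _ ih => exact .skipf A ih
  | skipb B _ ih => exact .skipb B ih

theorem sublist_append_of_sublist_left {Γ Δ : NSeq} (h : Sublist Γ Δ) (Θ : NSeq) :
    Sublist Γ (Δ.append Θ) := by
  simpa only [append_nil] using h.append (nil_sublist Θ)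

theorem fill : ∀ (C : Ctx) {Δ Δ' : NSeq}, Sublist Δ Δ' → Sublist (C.fill Δ) (C.fill Δ')
  | .hole, _, _, h => h
  | .fcons A C, _, _, h => .fcons A (fill C h)
  | .scons S C, _, _, h => .bcons (.refl S) (fill C h)
  | .binto C S, _, _, h => .bcons (fill C h) (.refl S)

theorem nestBox {Δs Δs' : List NSeq} (hs : List.Forall₂ Sublist Δs Δs') {Θ Θ' : NSeq}
    (h : Sublist Θ Θ') : Sublist (_root_.nestBox Δs Θ) (_root_.nestBox Δs' Θ') := by
  induction hs with
  | nil => exact .bcons h .nil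
  | cons hΔ _ ih => exact .bcons (hΔ.append ih) .nil

theorem exists_perm_fcons {A : Formula} {Γ Θ : NSeq} (w : Sublist (.fcons A Γ) Θ) :
    ∃ Θ', Perm Θ (.fcons A Θ') ∧ Sublist Γ Θ' := by
  generalize hΓ : NSeq.fcons A Γ = Γ₀ at w
  induction w with
  | nil | bcons => cases hΓ
  | fcons _ hw =>
      cases hΓ
      exact ⟨_, .refl _, hw⟩
  | skipf B _ ih =>
      obtain ⟨Θ', hp, hw⟩ := ih hΓ
      exact ⟨.fcons B Θ', .trans (.fcons B hp) (.swapff B A Θ'), .skipf B hw⟩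
  | skipb B _ ih =>
      obtain ⟨Θ', hp, hw⟩ := ih hΓ
      exact ⟨.bcons B Θ', .trans (.bcons (.refl B) hp) (.swapbf A B Θ'), .skipb B hw⟩

theorem exists_perm_bcons {B Γ Θ : NSeq} (w : Sublist (.bcons B Γ) Θ) :
    ∃ B' Θ', Perm Θ (.bcons B' Θ') ∧ Sublist B B' ∧ Sublist Γ Θ' := by
  generalize hΓ : NSeq.bcons B Γ = Γ₀ at w
  induction w with
  | nil | fcons => cases hΓ
  | bcons hB hw =>
      cases hΓ
      exact ⟨_, _, .refl _, hB, hw⟩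
  | skipf A _ ih =>
      obtain ⟨B', Θ', hp, hB, hw⟩ := ih hΓ
      exact ⟨B', .fcons A Θ', .trans (.fcons A hp) (.swapfb A B' Θ'), hB, .skipf A hw⟩
  | skipb C _ ih =>
      obtain ⟨B', Θ', hp, hB, hw⟩ := ih hΓ
      exact ⟨B', .bcons C Θ', .trans (.bcons (.refl C) hp) (.swapbb C B' Θ'), hB, .skipb C hw⟩

theorem exists_perm_append : ∀ (Γ : NSeq) {Δ Θ : NSeq}, Sublist (Γ.append Δ) Θ →
    ∃ Γ' Δ', Perm Θ (Γ'.append Δ') ∧ Sublist Γ Γ' ∧ Sublist Δ Δ'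
  | .nil, _, Θ, w => ⟨.nil, Θ, .refl Θ, .nil, w⟩
  | .fcons A Γ, _, _, w => by
      obtain ⟨Θ', hp, w'⟩ := w.exists_perm_fcons
      obtain ⟨Γ', Δ', hp', hΓ, hΔ⟩ := exists_perm_append Γ w'
      exact ⟨.fcons A Γ', Δ', .trans hp (.fcons A hp'), .fcons A hΓ, hΔ⟩
  | .bcons B Γ, _, _, w => by
      obtain ⟨B', Θ', hp, hB, w'⟩ := w.exists_perm_bcons
      obtain ⟨Γ', Δ', hp', hΓ, hΔ⟩ := exists_perm_append Γ w'
      exact ⟨.bcons B' Γ', Δ', .trans hp (.bcons (.refl B') hp'), .bcons hB hΓ, hΔ⟩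

end Sublist

theorem Perm.exists_sublist_perm {Γ₀ Γ : NSeq} (hP : Perm Γ₀ Γ) :
    ∀ {Θ : NSeq}, Sublist Γ Θ → ∃ Θ₀, Sublist Γ₀ Θ₀ ∧ Perm Θ₀ Θ := by
  induction hP with
  | nil => exact fun {Θ} _ => ⟨Θ, .nil_sublist Θ, .refl Θ⟩
  | fcons A _ ih =>
      intro Θ w
      obtain ⟨Θ', hp, w'⟩ := w.exists_perm_fcons
      obtain ⟨Θ₀, w₀, p₀⟩ := ih w'
      exact ⟨.fcons A Θ₀, .fcons A w₀, .trans (.fcons A p₀) hp.symm⟩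
  | bcons _ _ ihB ihΓ =>
      intro Θ w
      obtain ⟨B', Θ', hp, wB, w'⟩ := w.exists_perm_bcons
      obtain ⟨B₀, wB₀, pB₀⟩ := ihB wB
      obtain ⟨Θ₀, w₀, p₀⟩ := ihΓ w'
      exact ⟨.bcons B₀ Θ₀, .bcons wB₀ w₀, .trans (.bcons pB₀ p₀) hp.symm⟩
  | swapff A B _ =>
      intro Θ w
      obtain ⟨Θ₁, p₁, w₁⟩ := w.exists_perm_fcons
      obtain ⟨Θ₂, p₂, w₂⟩ := w₁.exists_perm_fcons
      exact ⟨.fcons A (.fcons B Θ₂), .fcons A (.fcons B w₂),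
        .trans (.swapff A B Θ₂) (.trans (.fcons B p₂.symm) p₁.symm)⟩
  | swapfb A _ _ =>
      intro Θ w
      obtain ⟨B', Θ₁, p₁, wB, w₁⟩ := w.exists_perm_bcons
      obtain ⟨Θ₂, p₂, w₂⟩ := w₁.exists_perm_fcons
      exact ⟨.fcons A (.bcons B' Θ₂), .fcons A (.bcons wB w₂),
        .trans (.swapfb A B' Θ₂) (.trans (.bcons (.refl B') p₂.symm) p₁.symm)⟩
  | swapbf A _ _ =>
      intro Θ w
      obtain ⟨Θ₁, p₁, w₁⟩ := w.exists_perm_fcons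
      obtain ⟨B', Θ₂, p₂, wB, w₂⟩ := w₁.exists_perm_bcons
      exact ⟨.bcons B' (.fcons A Θ₂), .bcons wB (.fcons A w₂),
        .trans (.swapbf A B' Θ₂) (.trans (.fcons A p₂.symm) p₁.symm)⟩
  | swapbb _ _ _ =>
      intro Θ w
      obtain ⟨C', Θ₁, p₁, wC, w₁⟩ := w.exists_perm_bcons
      obtain ⟨B', Θ₂, p₂, wB, w₂⟩ := w₁.exists_perm_bcons
      exact ⟨.bcons B' (.bcons C' Θ₂), .bcons wB (.bcons wC w₂),
        .trans (.swapbb B' C' Θ₂) (.trans (.bcons (.refl C') p₂.symm) p₁.symm)⟩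
  | trans _ _ ih₁ ih₂ =>
      intro Θ w
      obtain ⟨Θ₁, w₁, p₁⟩ := ih₂ w
      obtain ⟨Θ₀, w₀, p₀⟩ := ih₁ w₁
      exact ⟨Θ₀, w₀, .trans p₀ p₁⟩

end NSeq

namespace NSeq.Sublist

theorem exists_fill {C : Ctx} {S Θ : NSeq} (w : Sublist (C.fill S) Θ) :
    ∃ (C' : Ctx) (S' : NSeq), Θ = C'.fill S' ∧ Sublist S S' ∧
      ∀ {T T'}, Sublist T T' → Sublist (C.fill T) (C'.fill T') := by
  generalize hΓ : C.fill S = Γ at w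
  induction w generalizing C with
  | nil =>
      cases C <;> cases hΓ
      exact ⟨.hole, .nil, rfl, .nil, id⟩
  | @fcons A _ Δ hw ih =>
      cases C with
      | hole => cases hΓ; exact ⟨.hole, .fcons A Δ, rfl, .fcons A hw, id⟩
      | fcons A' C =>
          injection hΓ with hA hΓ
          cases hA
          obtain ⟨C', S', rfl, hS, hC⟩ := ih hΓ
          exact ⟨.fcons A C', S', rfl, hS, fun h => .fcons A (hC h)⟩
      | scons | binto => cases hΓ
  | @bcons _ B' _ Δ hB hw ihB ih =>
      cases C with
      | hole => cases hΓ; exact ⟨.hole, .bcons B' Δ, rfl, .bcons hB hw, id⟩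
      | fcons => cases hΓ
      | scons S₀ C =>
          injection hΓ with hS₀ hΓ
          cases hS₀
          obtain ⟨C', S', rfl, hS, hC⟩ := ih hΓ
          exact ⟨.scons B' C', S', rfl, hS, fun h => .bcons hB (hC h)⟩
      | binto C S₀ =>
          injection hΓ with hΓ hS₀
          cases hS₀
          obtain ⟨C', S', rfl, hS, hC⟩ := ihB hΓ
          exact ⟨.binto C' Δ, S', rfl, hS, fun h => .bcons (hC h) hw⟩
  | skipf A _ ih =>
      obtain ⟨C', S', rfl, hS, hC⟩ := ih hΓ
      exact ⟨.fcons A C', S', rfl, hS, fun h => .skipf A (hC h)⟩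
  | skipb B _ ih =>
      obtain ⟨C', S', rfl, hS, hC⟩ := ih hΓ
      exact ⟨.scons B C', S', rfl, hS, fun h => .skipb B (hC h)⟩

theorem exists_nestBox : ∀ {Δs : List NSeq} {Θ₀ Θ : NSeq}, Sublist (_root_.nestBox Δs Θ₀) Θ →
    ∃ Δs' Θ₀' R, List.Forall₂ Sublist Δs Δs' ∧ Sublist Θ₀ Θ₀' ∧
      Perm Θ ((_root_.nestBox Δs' Θ₀').append R)
  | [], _, _, w => by
      obtain ⟨B', R, hp, hB, -⟩ := w.exists_perm_bcons
      exact ⟨[], B', R, .nil, hB, hp⟩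
  | Δ :: _, _, _, w => by
      obtain ⟨B', R, hp, hB, -⟩ := w.exists_perm_bcons
      obtain ⟨Γ', Δ', hpB, hΔ, hrest⟩ := exists_perm_append Δ hB
      obtain ⟨Δs', Θ₀', R', hs, hΘ₀, hpΔ⟩ := exists_nestBox hrest
      refine ⟨Γ'.append R' :: Δs', Θ₀', R, .cons (hΔ.sublist_append_of_sublist_left R') hs, hΘ₀,
        .trans hp (.bcons (.trans hpB ?_) (.refl R))⟩
      rw [append_assoc]
      exact .append_left Γ' (.trans hpΔ (perm_append_comm _ _))

end NSeq.Sublist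

namespace Prf

open NSeq

variable {Xk X4 : Set ℕ} {ρ : ℕ → Prop} {h : ℕ}

theorem comp_prepend {C : Ctx} {P R : NSeq} (pf : Prf Xk X4 ρ h (C.fill (P.append R))) :
    Prf Xk X4 ρ h ((C.comp (.prepend R)).fill P) := by
  rw [Ctx.fill_comp, Ctx.fill_prepend]
  exact .exch (C.fill_perm (perm_append_comm P R)) pf

theorem of_comp_prepend {C : Ctx} {Q R S : NSeq} (pf : Prf Xk X4 ρ h ((C.comp (.prepend R)).fill Q))
    (hp : Perm (Q.append R) S) : Prf Xk X4 ρ h (C.fill S) := by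
  rw [Ctx.fill_comp, Ctx.fill_prepend] at pf
  exact .exch (C.fill_perm ((perm_append_comm R Q).trans hp)) pf

/-- In each case the weakened principal part is, up to permutation, `Q.append R` for an instance
`Q` of the same rule, which is then reapplied in the context `C', R, ·`. -/
theorem weaken {Γ Θ : NSeq} (pf : Prf Xk X4 ρ h Γ) (w : Sublist Γ Θ) : Prf Xk X4 ρ h Θ := by
  induction pf generalizing Θ with
  | id C p h =>
      obtain ⟨C', S', rfl, hS, -⟩ := w.exists_fill
      obtain ⟨Θ₁, hp₁, w₁⟩ := hS.exists_perm_fcons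
      obtain ⟨R, hp₂, -⟩ := w₁.exists_perm_fcons
      exact (Prf.id (C'.comp (.prepend R)) p h).of_comp_prepend (hp₁.trans (.fcons _ hp₂)).symm
  | orR C A B _ ih =>
      obtain ⟨C', S', rfl, hS, hC⟩ := w.exists_fill
      obtain ⟨R, hp, -⟩ := hS.exists_perm_fcons
      have := ih (hC ((Sublist.refl _).sublist_append_of_sublist_left R))
      exact (Prf.orR _ A B this.comp_prepend).of_comp_prepend hp.symm
  | andR C A B _ _ ihA ihB =>
      obtain ⟨C', S', rfl, hS, hC⟩ := w.exists_fill
      obtain ⟨R, hp, -⟩ := hS.exists_perm_fcons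
      have hA := ihA (hC ((Sublist.refl _).sublist_append_of_sublist_left R))
      have hB := ihB (hC ((Sublist.refl _).sublist_append_of_sublist_left R))
      exact (Prf.andR _ A B hA.comp_prepend hB.comp_prepend).of_comp_prepend hp.symm
  | boxR C A _ ih =>
      obtain ⟨C', S', rfl, hS, hC⟩ := w.exists_fill
      obtain ⟨R, hp, -⟩ := hS.exists_perm_fcons
      have := ih (hC ((Sublist.refl _).sublist_append_of_sublist_left R))
      exact (Prf.boxR _ A this.comp_prepend).of_comp_prepend hp.symm
  | diaR C A Δ _ ih =>
      obtain ⟨C', S', rfl, hS, hC⟩ := w.exists_fill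
      obtain ⟨Θ₁, hp₁, w₁⟩ := hS.exists_perm_fcons
      obtain ⟨Δ', R, hp₂, hΔ, -⟩ := w₁.exists_perm_bcons
      have := ih (hC ((Sublist.fcons _ (.bcons (.fcons A hΔ) .nil)).sublist_append_of_sublist_left R))
      exact (Prf.diaR _ A Δ' this.comp_prepend).of_comp_prepend (hp₁.trans (.fcons _ hp₂)).symm
  | propk C A Δs Δn hn _ ih =>
      obtain ⟨C', S', rfl, hS, hC⟩ := w.exists_fill
      obtain ⟨Θ₁, hp₁, w₁⟩ := hS.exists_perm_fcons
      obtain ⟨Δs', Δn', R, hs, hΔn, hp₂⟩ := w₁.exists_nestBox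
      have := ih (hC ((Sublist.fcons _ (.nestBox hs (.fcons A hΔn))).sublist_append_of_sublist_left R))
      exact (Prf.propk _ A Δs' Δn' (hs.length_eq ▸ hn) this.comp_prepend).of_comp_prepend
        (hp₁.trans (.fcons _ hp₂)).symm
  | prop4 C A Δs Δl hn _ ih =>
      obtain ⟨C', S', rfl, hS, hC⟩ := w.exists_fill
      obtain ⟨Θ₁, hp₁, w₁⟩ := hS.exists_perm_fcons
      obtain ⟨Δs', Δl', R, hs, hΔl, hp₂⟩ := w₁.exists_nestBox
      have := ih (hC ((Sublist.fcons _ (.nestBox hs (.fcons _ hΔl))).sublist_append_of_sublist_left R))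
      exact (Prf.prop4 _ A Δs' Δl' (hs.length_eq ▸ hn) this.comp_prepend).of_comp_prepend
        (hp₁.trans (.fcons _ hp₂)).symm
  | cut C A hA _ _ ih₁ ih₂ =>
      obtain ⟨C', S', rfl, -, hC⟩ := w.exists_fill
      have h₁ := ih₁ (hC ((Sublist.refl _).sublist_append_of_sublist_left S'))
      have h₂ := ih₂ (hC ((Sublist.refl _).sublist_append_of_sublist_left S'))
      exact (Prf.cut _ A hA h₁.comp_prepend h₂.comp_prepend).of_comp_prepend (.refl S')
  | exch hP _ ih =>
      obtain ⟨Θ₀, w₀, hp₀⟩ := hP.exists_sublist_perm w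
      exact .exch hp₀ (ih w₀)

theorem succ {Γ : NSeq} (pf : Prf Xk X4 ρ h Γ) : Prf Xk X4 ρ (h + 1) Γ := by
  induction pf with
  | id C p h => exact .id C p (h + 1)
  | orR C A B _ ih => exact .orR C A B ih
  | andR C A B _ _ ihA ihB => exact .andR C A B ihA ihB
  | boxR C A _ ih => exact .boxR C A ih
  | diaR C A Δ _ ih => exact .diaR C A Δ ih
  | propk C A Δs Δn hn _ ih => exact .propk C A Δs Δn hn ih
  | prop4 C A Δs Δl hn _ ih => exact .prop4 C A Δs Δl hn ih
  | cut C A hA _ _ ih₁ ih₂ => exact .cut C A hA ih₁ ih₂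
  | exch hP _ ih => exact .exch hP ih

theorem mono {Γ : NSeq} (pf : Prf Xk X4 ρ h Γ) {h' : ℕ} (hh : h ≤ h') : Prf Xk X4 ρ h' Γ := by
  induction hh with
  | refl => exact pf
  | step _ ih => exact ih.succ

end Prf

namespace Provable

variable {Xk X4 : Set ℕ} {ρ : ℕ → Prop} {Γ Θ : NSeq}

theorem exch (hΓ : Provable Xk X4 ρ Γ) (hP : NSeq.Perm Γ Θ) : Provable Xk X4 ρ Θ :=
  let ⟨h, pf⟩ := hΓ
  ⟨h, .exch hP pf⟩

theorem weaken (hΓ : Provable Xk X4 ρ Γ) (w : NSeq.Sublist Γ Θ) : Provable Xk X4 ρ Θ :=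
  let ⟨h, pf⟩ := hΓ
  ⟨h, pf.weaken w⟩

end Provable

/-- Admissibility of the rule `♦₄ₙ`, i.e. of `Prf.prop4` with `Δs.length + 2 = n`. -/
def Dia4Admissible (Xk X4 : Set ℕ) (ρ : ℕ → Prop) (n : ℕ) : Prop :=
  ∀ (Γ : Ctx) (A : Formula) (Δs : List NSeq) (Δl : NSeq), Δs.length + 2 = n →
    Provable Xk X4 ρ (Γ.fill (.fcons (.dia A) (nestBox Δs (.fcons (.dia A) Δl)))) →
    Provable Xk X4 ρ (Γ.fill (.fcons (.dia A) (nestBox Δs Δl)))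

namespace Dia4Admissible

variable {Xk X4 : Set ℕ} {ρ : ℕ → Prop}

theorem of_mem {n : ℕ} (hn : n ∈ X4) : Dia4Admissible Xk X4 ρ n :=
  fun Γ A Δs Δl hlen ⟨h, pf⟩ => ⟨h + 1, .prop4 Γ A Δs Δl (hlen ▸ hn) pf⟩

theorem add_sub_one {m l : ℕ} (hm : 2 ≤ m) (hl : 2 ≤ l) (Hm : Dia4Admissible Xk X4 ρ m)
    (Hl : Dia4Admissible Xk X4 ρ l) : Dia4Admissible Xk X4 ρ (m + l - 1) := by
  intro Γ A Δs Δl hlen hyp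
  obtain ⟨Δs₁, Δ, Δs₂, rfl, hlen₁⟩ :=
    List.exists_eq_append_cons_of_lt (show m - 2 < Δs.length by omega)
  have hlen₂ : Δs₂.length + 2 = l := by
    simp only [List.length_append, List.length_cons] at hlen
    omega
  rw [nestBox_append] at hyp ⊢
  let C := Γ.comp (.fcons (.dia A) (Ctx.nestBox Δs₁))
  have hC : ∀ Z, C.fill Z = Γ.fill (.fcons (.dia A) (nestBox Δs₁ Z)) := fun Z => by
    rw [Ctx.fill_comp, Ctx.fill, Ctx.fill_nestBox]
  rw [← hC] at hyp
  have hweak : Provable Xk X4 ρ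
      ((C.comp (.prepend Δ)).fill (.fcons (.dia A) (nestBox Δs₂ (.fcons (.dia A) Δl)))) := by
    rw [Ctx.fill_comp, Ctx.fill_prepend]
    exact (hyp.weaken (.fill C (.skipf (.dia A) (.refl _)))).exch
      (C.fill_perm (NSeq.perm_fcons_middle _ _ _))
  have hdeep := Hl _ A Δs₂ Δl hlen₂ hweak
  rw [Ctx.fill_comp, Ctx.fill_prepend] at hdeep
  have hshallow := hdeep.exch (C.fill_perm (NSeq.perm_fcons_middle _ _ _).symm)
  rw [hC] at hshallow
  exact Hm Γ A Δs₁ _ (by omega) hshallow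

end Dia4Admissible

theorem compStep_subset {X : Set ℕ} (hX : X ⊆ {n | 1 < n}) : ∀ p, compStep X p ⊆ {n | 1 < n}
  | 0 => hX
  | p + 1 => by
      rintro n (hn | ⟨m, l, hm, hl, rfl⟩)
      · exact compStep_subset hX p hn
      · have hm : 1 < m := compStep_subset hX p hm
        have hl : 1 < l := compStep_subset hX p hl
        show 1 < m + l - 1
        omega

theorem dia4Admissible_of_mem_compStep {Xk X : Set ℕ} {ρ : ℕ → Prop} (hX : X ⊆ {n | 1 < n}) :
    ∀ {p n : ℕ}, n ∈ compStep X p → Dia4Admissible Xk X ρ n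
  | 0, _, hn => .of_mem hn
  | _ + 1, _, .inl hn => dia4Admissible_of_mem_compStep hX hn
  | p + 1, _, .inr ⟨_, _, hm, hl, rfl⟩ =>
      .add_sub_one (compStep_subset hX p hm) (compStep_subset hX p hl)
        (dia4Admissible_of_mem_compStep hX hm) (dia4Admissible_of_mem_compStep hX hl)

theorem dia4Admissible_of_mem_completion {Xk X : Set ℕ} {ρ : ℕ → Prop} (hX : X ⊆ {n | 1 < n})
    {n : ℕ} (hn : n ∈ completion X) : Dia4Admissible Xk X ρ n :=
  let ⟨_, hp⟩ := Set.mem_iUnion.1 hn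
  dia4Admissible_of_mem_compStep hX hp

theorem Provable.of_dia4Admissible {Xk X Y : Set ℕ} {ρ : ℕ → Prop} {Γ : NSeq}
    (hY : ∀ n ∈ Y, Dia4Admissible Xk X ρ n) (hΓ : Provable Xk Y ρ Γ) : Provable Xk X ρ Γ := by
  obtain ⟨h, pf⟩ := hΓ
  induction pf with
  | id C p h => exact ⟨h, .id C p h⟩
  | orR C A B _ ih =>
      obtain ⟨h, pf⟩ := ih
      exact ⟨h + 1, .orR C A B pf⟩
  | andR C A B _ _ ihA ihB =>
      obtain ⟨hA, pfA⟩ := ihA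
      obtain ⟨hB, pfB⟩ := ihB
      exact ⟨max hA hB + 1, .andR C A B (pfA.mono (le_max_left ..)) (pfB.mono (le_max_right ..))⟩
  | boxR C A _ ih =>
      obtain ⟨h, pf⟩ := ih
      exact ⟨h + 1, .boxR C A pf⟩
  | diaR C A Δ _ ih =>
      obtain ⟨h, pf⟩ := ih
      exact ⟨h + 1, .diaR C A Δ pf⟩
  | propk C A Δs Δn hn _ ih =>
      obtain ⟨h, pf⟩ := ih
      exact ⟨h + 1, .propk C A Δs Δn hn pf⟩
  | prop4 C A Δs Δl hn _ ih => exact hY _ hn C A Δs Δl rfl ih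
  | cut C A hA _ _ ih₁ ih₂ =>
      obtain ⟨h₁, pf₁⟩ := ih₁
      obtain ⟨h₂, pf₂⟩ := ih₂
      exact ⟨max h₁ h₂ + 1, .cut C A hA (pf₁.mono (le_max_left ..)) (pf₂.mono (le_max_right ..))⟩
  | exch hP _ ih => exact ih.exch hP

/-- System completion reduction: provability in `nK + ♦₄X̂` implies provability
in `nK + ♦₄X`; in particular each rule `♦₄ₙ` with `n ∈ X̂` is admissible in
`nK + ♦₄X`. -/
theorem completion_reduction (X : Set ℕ) (hX : X ⊆ {n : ℕ | 1 < n}) :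
    (∀ Γ : NSeq, Provable ∅ (completion X) cutFree Γ → Provable ∅ X cutFree Γ) ∧
    (∀ n ∈ completion X, ∀ (Γ : Ctx) (A : Formula) (Δs : List NSeq) (Δl : NSeq),
      Δs.length + 2 = n →
      Provable ∅ X cutFree
        (Γ.fill (NSeq.fcons (.dia A) (nestBox Δs (NSeq.fcons (.dia A) Δl)))) →
      Provable ∅ X cutFree (Γ.fill (NSeq.fcons (.dia A) (nestBox Δs Δl)))) := by
  have hadm : ∀ n ∈ completion X, Dia4Admissible ∅ X cutFree n :=
    fun _ hn => dia4Admissible_of_mem_completion hX hn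
  exact ⟨fun _ hΓ => hΓ.of_dia4Admissible hadm, hadm⟩
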